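/- Let M > 0, let P = (0, 0, P₃) ∈ ℝ³ with |P₃| < M, let 0 ≤ σ ≤ Λ, and let j, j' ∈ {1,2,3} with j ≠ j'. Then Σ_{λ=1,2} ∫_{ℝ³} 1_{|k|≥σ}(k) · conj(h^B_j(0,k,λ)) · h^B_{j'}(0,k,λ) / (|k| − (k·P)/M + |k|²/(2M)) dk = 0, where the integrand is Lebesgue integrable (it is defined for almost every k). -/

import Mathlib

noncomputable section

/-- ℝ³ with the Euclidean norm. -/
abbrev R3 := EuclideanSpace ℝ (Fin 3)

/-- Build a vector of ℝ³ from its three coordinates. -/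
def vec (x y z : ℝ) : R3 := (WithLp.equiv 2 (Fin 3 → ℝ)).symm ![x, y, z]

/-- The cross product on ℝ³. -/
def cross (a b : R3) : R3 :=
  vec (a 1 * b 2 - a 2 * b 1) (a 2 * b 0 - a 0 * b 2) (a 0 * b 1 - a 1 * b 0)

/-- The first polarization vector `ε¹(k) = (k₂, −k₁, 0)/√(k₁²+k₂²)`. -/
def eps1 (k : R3) : R3 := (Real.sqrt (k 0 ^ 2 + k 1 ^ 2))⁻¹ • vec (k 1) (-(k 0)) 0

/-- The second polarization vector `ε²(k) = (k/|k|) × ε¹(k)`. -/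
def eps2 (k : R3) : R3 := cross (‖k‖⁻¹ • k) (eps1 k)

/-- The polarization vectors indexed by `λ ∈ {1,2}`. -/
def eps (k : R3) : Fin 2 → R3 := ![eps1 k, eps2 k]

/-- The ultraviolet cutoff function `χ_Λ(k) = 1_{|k| ≤ Λ}(k)`. -/
def chi (Λ : ℝ) (k : R3) : ℝ := if ‖k‖ ≤ Λ then 1 else 0

/-- The coupling function
`h^A_j(x,k,λ) = (1/(2π)) (χ_Λ(k)/|k|^{1/2}) ε^λ_j(k) e^{−i k·x}`. -/
def hA (Λ : ℝ) (x k : R3) (lam : Fin 2) (j : Fin 3) : ℂ :=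
  (((1 / (2 * Real.pi)) * (chi Λ k / ‖k‖ ^ ((1 : ℝ) / 2)) * eps k lam j : ℝ) : ℂ) *
    Complex.exp (-Complex.I * ((inner ℝ k x : ℝ) : ℂ))

/-- The coupling function
`h^B_j(x,k,λ) = −(i/(2π)) |k|^{1/2} χ_Λ(k) ((k/|k|) × ε^λ(k))_j e^{−i k·x}`. -/
def hB (Λ : ℝ) (x k : R3) (lam : Fin 2) (j : Fin 3) : ℂ :=
  -(Complex.I / ((2 * Real.pi : ℝ) : ℂ)) *
    ((‖k‖ ^ ((1 : ℝ) / 2) * chi Λ k * cross (‖k‖⁻¹ • k) (eps k lam) j : ℝ) : ℂ) *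
    Complex.exp (-Complex.I * ((inner ℝ k x : ℝ) : ℂ))

/-! Let `R` reflect a coordinate `m ∈ {j, j'}` other than the third. It preserves Lebesgue
measure, `|k|`, the cutoffs and, as `P` lies on the third axis, the denominator. Since
`det R = -1` we have `Ra × Rb = -R(a × b)`, hence `ε¹(Rk) = -Rε¹(k)` and `ε²(Rk) = Rε²(k)`, so
`k̂ × ε^λ` is mapped to `±R(k̂ × ε^λ)`. Thus `(k̂ × ε^λ)_j (k̂ × ε^λ)_{j'}` is odd under `R`, and
so is each integrand: every term of the sum vanishes on its own. Integrability holds because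
`|h^B|² ≤ |k| χ_Λ / (2π)²` while the denominator is at least `|k| (1 - |P|/M)`. -/

open MeasureTheory ComplexConjugate

@[simp] lemma vec_apply_zero (x y z : ℝ) : vec x y z 0 = x := rfl
@[simp] lemma vec_apply_one (x y z : ℝ) : vec x y z 1 = y := rfl
@[simp] lemma vec_apply_two (x y z : ℝ) : vec x y z 2 = z := rfl

@[simp] lemma eps_zero (k : R3) : eps k 0 = eps1 k := rfl
@[simp] lemma eps_one (k : R3) : eps k 1 = eps2 k := rfl

lemma norm_vec (x y z : ℝ) : ‖vec x y z‖ = √(x ^ 2 + y ^ 2 + z ^ 2) := by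
  simp [EuclideanSpace.norm_eq, Fin.sum_univ_three, add_assoc]

lemma cross_neg_right (a b : R3) : cross a (-b) = -cross a b := by
  ext i; fin_cases i <;> simp [cross] <;> ring

lemma norm_cross_le (a b : R3) : ‖cross a b‖ ≤ ‖a‖ * ‖b‖ := by
  have lagrange : ‖cross a b‖ ^ 2 + inner ℝ a b ^ 2 = (‖a‖ * ‖b‖) ^ 2 := by
    simp only [mul_pow, EuclideanSpace.norm_sq_eq, PiLp.inner_apply, Fin.sum_univ_three,
      Real.norm_eq_abs, sq_abs, cross, vec_apply_zero, vec_apply_one, vec_apply_two,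
      RCLike.inner_apply, conj_trivial]
    ring
  exact (pow_le_pow_iff_left₀ (norm_nonneg _) (by positivity) two_ne_zero).1
    (by nlinarith [sq_nonneg (inner ℝ a b)])

lemma norm_eps1_le (k : R3) : ‖eps1 k‖ ≤ 1 := by
  rw [eps1, norm_smul, norm_vec, norm_inv, Real.norm_of_nonneg (Real.sqrt_nonneg _)]
  refine inv_mul_le_one_of_le₀ (le_of_eq ?_) (Real.sqrt_nonneg _)
  ring_nf

lemma norm_inv_norm_smul_le {E : Type*} [NormedAddCommGroup E] [NormedSpace ℝ E] (x : E) :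
    ‖‖x‖⁻¹ • x‖ ≤ 1 := by
  simpa using inv_norm_smul_mem_unitClosedBall x

lemma norm_eps_le (k : R3) (lam : Fin 2) : ‖eps k lam‖ ≤ 1 := by
  revert lam
  refine Fin.forall_fin_two.2 ⟨norm_eps1_le k, ?_⟩
  calc ‖eps k 1‖ = ‖eps2 k‖ := rfl
    _ ≤ ‖‖k‖⁻¹ • k‖ * ‖eps1 k‖ := norm_cross_le _ _
    _ ≤ 1 * 1 := by gcongr; exacts [norm_inv_norm_smul_le k, norm_eps1_le k]
    _ = 1 := one_mul 1

lemma norm_cross_eps_le (k : R3) (lam : Fin 2) : ‖cross (‖k‖⁻¹ • k) (eps k lam)‖ ≤ 1 :=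
  calc ‖cross (‖k‖⁻¹ • k) (eps k lam)‖ ≤ ‖‖k‖⁻¹ • k‖ * ‖eps k lam‖ := norm_cross_le _ _
    _ ≤ 1 * 1 := by gcongr; exacts [norm_inv_norm_smul_le k, norm_eps_le k lam]
    _ = 1 := one_mul 1

def reflect (m : Fin 3) : R3 ≃ₗᵢ[ℝ] R3 :=
  LinearIsometryEquiv.piLpCongrRight 2
    fun i => if i = m then LinearIsometryEquiv.neg ℝ else LinearIsometryEquiv.refl ℝ ℝ

lemma reflect_apply (m : Fin 3) (k : R3) (i : Fin 3) :
    reflect m k i = if i = m then -k i else k i := by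
  rw [reflect, LinearIsometryEquiv.piLpCongrRight_apply]
  split_ifs <;> simp [*]

lemma reflect_vec_zero_zero {m : Fin 3} (hm : m ≠ 2) (z : ℝ) :
    reflect m (vec 0 0 z) = vec 0 0 z := by
  ext i; fin_cases m <;> fin_cases i <;> simp_all [reflect_apply]

lemma reflect_mul_reflect_of_xor {m j j' : Fin 3} (h : Xor (j = m) (j' = m)) (v : R3) :
    reflect m v j * reflect m v j' = -(v j * v j') := by
  rcases h with ⟨hj, hj'⟩ | ⟨hj', hj⟩ <;> simp [reflect_apply, hj, hj']

lemma inner_reflect_of_reflect_eq {m : Fin 3} {p : R3} (hp : reflect m p = p) (k : R3) :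
    inner ℝ (reflect m k) p = inner ℝ k p := by
  conv_lhs => rw [← hp]
  exact (reflect m).inner_map_map k p

lemma cross_reflect (m : Fin 3) (a b : R3) :
    cross (reflect m a) (reflect m b) = -reflect m (cross a b) := by
  ext i; fin_cases m <;> fin_cases i <;> simp [cross, reflect_apply] <;> ring

lemma eps1_reflect {m : Fin 3} (hm : m ≠ 2) (k : R3) :
    eps1 (reflect m k) = -reflect m (eps1 k) := by
  ext i; fin_cases m <;> fin_cases i <;> simp_all [eps1, reflect_apply]

lemma eps2_reflect {m : Fin 3} (hm : m ≠ 2) (k : R3) :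
    eps2 (reflect m k) = reflect m (eps2 k) := by
  rw [eps2, eps2, eps1_reflect hm, LinearIsometryEquiv.norm_map, ← map_smul, cross_neg_right,
    cross_reflect, neg_neg]

lemma cross_eps_reflect {m : Fin 3} (hm : m ≠ 2) (k : R3) (lam : Fin 2) :
    ∃ s : ℝ, s * s = 1 ∧ cross (‖reflect m k‖⁻¹ • reflect m k) (eps (reflect m k) lam) =
      s • reflect m (cross (‖k‖⁻¹ • k) (eps k lam)) := by
  rw [LinearIsometryEquiv.norm_map, ← map_smul]
  revert lam
  refine Fin.forall_fin_two.2 ⟨⟨1, one_mul 1, ?_⟩, ⟨-1, by norm_num, ?_⟩⟩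
  · rw [eps_zero, eps_zero, eps1_reflect hm, cross_neg_right, cross_reflect, neg_neg, one_smul]
  · rw [eps_one, eps_one, eps2_reflect hm, cross_reflect, neg_one_smul]

lemma cross_eps_mul_reflect {m j j' : Fin 3} (hm : m ≠ 2) (h : Xor (j = m) (j' = m)) (k : R3)
    (lam : Fin 2) :
    cross (‖reflect m k‖⁻¹ • reflect m k) (eps (reflect m k) lam) j *
        cross (‖reflect m k‖⁻¹ • reflect m k) (eps (reflect m k) lam) j' =
      -(cross (‖k‖⁻¹ • k) (eps k lam) j * cross (‖k‖⁻¹ • k) (eps k lam) j') := by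
  obtain ⟨s, hs, hc⟩ := cross_eps_reflect hm k lam
  rw [hc, ← reflect_mul_reflect_of_xor h]
  simp only [PiLp.smul_apply, smul_eq_mul]
  linear_combination (reflect m (cross (‖k‖⁻¹ • k) (eps k lam)) j *
    reflect m (cross (‖k‖⁻¹ • k) (eps k lam)) j') * hs

lemma conj_hB_mul_hB (Λ : ℝ) (x k : R3) (lam : Fin 2) (j j' : Fin 3) :
    conj (hB Λ x k lam j) * hB Λ x k lam j' =
      (((2 * Real.pi)⁻¹ ^ 2 * ‖k‖ * chi Λ k ^ 2 *
        (cross (‖k‖⁻¹ • k) (eps k lam) j * cross (‖k‖⁻¹ • k) (eps k lam) j') : ℝ) : ℂ) := by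
  have hphase : conj (Complex.exp (-Complex.I * (inner ℝ k x : ℝ))) *
      Complex.exp (-Complex.I * (inner ℝ k x : ℝ)) = 1 := by
    rw [← Complex.exp_conj, ← Complex.exp_add]
    simp
  have hsqrt : ((‖k‖ ^ ((1 : ℝ) / 2) : ℝ) : ℂ) * ((‖k‖ ^ ((1 : ℝ) / 2) : ℝ) : ℂ) = ‖k‖ := by
    rw [← Complex.ofReal_mul, ← Real.rpow_add' (norm_nonneg k) (by norm_num)]
    norm_num
  set c := cross (‖k‖⁻¹ • k) (eps k lam)
  simp only [hB, map_mul, map_neg, map_div₀, Complex.conj_I, Complex.conj_ofReal]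
  push_cast
  linear_combination
    ((2 * Real.pi : ℂ)⁻¹ ^ 2 * (‖k‖ ^ ((1 : ℝ) / 2) : ℝ) ^ 2 * (chi Λ k : ℂ) ^ 2 *
      c j * c j') * hphase +
    ((2 * Real.pi : ℂ)⁻¹ ^ 2 * (chi Λ k : ℂ) ^ 2 * c j * c j') * hsqrt -
    ((2 * Real.pi : ℂ)⁻¹ ^ 2 * (‖k‖ ^ ((1 : ℝ) / 2) : ℝ) ^ 2 * (chi Λ k : ℂ) ^ 2 *
      c j * c j' * conj (Complex.exp (-Complex.I * (inner ℝ k x : ℝ))) *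
      Complex.exp (-Complex.I * (inner ℝ k x : ℝ))) * Complex.I_sq

section Measurability

variable {α : Type*} [MeasurableSpace α]

@[fun_prop]
lemma Measurable.vec {f g h : α → ℝ} (hf : Measurable f) (hg : Measurable g)
    (hh : Measurable h) : Measurable fun a => vec (f a) (g a) (h a) := by
  refine (WithLp.measurable_toLp 2 _).comp (measurable_pi_lambda _ fun i => ?_)
  fin_cases i <;> assumption

@[fun_prop]
lemma Measurable.cross {f g : α → R3} (hf : Measurable f) (hg : Measurable g) :
    Measurable fun a => cross (f a) (g a) := by
  unfold _root_.cross
  fun_prop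

end Measurability

@[fun_prop]
lemma measurable_chi (Λ : ℝ) : Measurable (chi Λ) :=
  Measurable.ite (measurableSet_le measurable_norm measurable_const) measurable_const
    measurable_const

@[fun_prop]
lemma measurable_eps (lam : Fin 2) : Measurable fun k => eps k lam := by
  have h1 : Measurable eps1 := by unfold eps1; fun_prop
  revert lam
  refine Fin.forall_fin_two.2 ⟨h1, ?_⟩
  simp only [eps_one, eps2]
  fun_prop

@[fun_prop]
lemma measurable_hB (Λ : ℝ) (x : R3) (lam : Fin 2) (j : Fin 3) :
    Measurable fun k => hB Λ x k lam j := by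
  unfold hB
  fun_prop

def energyDenom (M : ℝ) (P k : R3) : ℝ := ‖k‖ - inner ℝ k P / M + ‖k‖ ^ 2 / (2 * M)

lemma mul_le_energyDenom {M : ℝ} (hM : 0 < M) (P k : R3) :
    ‖k‖ * (1 - ‖P‖ / M) ≤ energyDenom M P k := by
  have hinner : inner ℝ k P / M ≤ ‖k‖ * ‖P‖ / M := by gcongr; exact real_inner_le_norm k P
  have hsq : 0 ≤ ‖k‖ ^ 2 / (2 * M) := by positivity
  rw [energyDenom]
  linarith [mul_div_assoc ‖k‖ ‖P‖ M]

lemma norm_div_energyDenom_le {M : ℝ} (hM : 0 < M) {P : R3} (hP : ‖P‖ < M) (k : R3) :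
    ‖k‖ / |energyDenom M P k| ≤ (1 - ‖P‖ / M)⁻¹ := by
  have hδ : 0 < 1 - ‖P‖ / M := by rw [sub_pos, div_lt_one hM]; exact hP
  have hD := mul_le_energyDenom hM P k
  rw [abs_of_nonneg (le_trans (by positivity) hD)]
  rcases (le_trans (by positivity) hD).eq_or_lt with h0 | hpos
  · rw [← h0, div_zero]; positivity
  · rw [div_le_iff₀ hpos, ← div_eq_inv_mul, le_div_iff₀ hδ]
    exact hD

lemma energyDenom_reflect {M : ℝ} {m : Fin 3} {P : R3} (hP : reflect m P = P) (k : R3) :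
    energyDenom M P (reflect m k) = energyDenom M P k := by
  rw [energyDenom, energyDenom, LinearIsometryEquiv.norm_map, inner_reflect_of_reflect_eq hP]

def hBIntegrand (M Λ σ : ℝ) (P x : R3) (lam : Fin 2) (j j' : Fin 3) (k : R3) : ℂ :=
  (if σ ≤ ‖k‖ then (1 : ℂ) else 0) * (conj (hB Λ x k lam j) * hB Λ x k lam j') /
    (energyDenom M P k : ℂ)

lemma norm_hBIntegrand_le {M : ℝ} (hM : 0 < M) {P : R3} (hP : ‖P‖ < M) (Λ σ : ℝ) (x : R3)
    (lam : Fin 2) (j j' : Fin 3) (k : R3) :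
    ‖hBIntegrand M Λ σ P x lam j j' k‖ ≤
      (Metric.closedBall 0 Λ).indicator (fun _ => (2 * Real.pi)⁻¹ ^ 2 * (1 - ‖P‖ / M)⁻¹) k := by
  by_cases hk : ‖k‖ ≤ Λ
  · rw [Set.indicator_of_mem (by simpa using hk)]
    have hchi : chi Λ k = 1 := if_pos hk
    have hc := norm_cross_eps_le k lam
    have hcj := (PiLp.norm_apply_le (cross (‖k‖⁻¹ • k) (eps k lam)) j).trans hc
    have hcj' := (PiLp.norm_apply_le (cross (‖k‖⁻¹ • k) (eps k lam)) j').trans hc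
    have hind : ‖(if σ ≤ ‖k‖ then (1 : ℂ) else 0)‖ ≤ 1 := by split_ifs <;> simp
    rw [hBIntegrand, conj_hB_mul_hB, hchi, norm_div, norm_mul, Complex.norm_real,
      Complex.norm_real, Real.norm_eq_abs]
    calc ‖(if σ ≤ ‖k‖ then (1 : ℂ) else 0)‖ * |(2 * Real.pi)⁻¹ ^ 2 * ‖k‖ * 1 ^ 2 *
          (cross (‖k‖⁻¹ • k) (eps k lam) j * cross (‖k‖⁻¹ • k) (eps k lam) j')| /
          |energyDenom M P k|
        ≤ 1 * ((2 * Real.pi)⁻¹ ^ 2 * ‖k‖ * 1 ^ 2 * (1 * 1)) / |energyDenom M P k| := by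
          rw [abs_mul, abs_of_nonneg (by positivity), abs_mul]
          gcongr
          exacts [hcj, hcj']
      _ = (2 * Real.pi)⁻¹ ^ 2 * (‖k‖ / |energyDenom M P k|) := by ring
      _ ≤ (2 * Real.pi)⁻¹ ^ 2 * (1 - ‖P‖ / M)⁻¹ := by
          gcongr; exact norm_div_energyDenom_le hM hP k
  · have hchi : chi Λ k = 0 := if_neg hk
    rw [Set.indicator_of_notMem (by simpa using hk), hBIntegrand, conj_hB_mul_hB, hchi]
    simp

lemma integrable_hBIntegrand {M : ℝ} (hM : 0 < M) {P : R3} (hP : ‖P‖ < M) (Λ σ : ℝ) (x : R3)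
    (lam : Fin 2) (j j' : Fin 3) : Integrable (hBIntegrand M Λ σ P x lam j j') := by
  refine Integrable.mono' ((integrable_indicator_iff measurableSet_closedBall).2
    (integrableOn_const measure_closedBall_lt_top.ne)) ?_
    (.of_forall (norm_hBIntegrand_le hM hP Λ σ x lam j j'))
  have hcut : Measurable fun k : R3 => if σ ≤ ‖k‖ then (1 : ℂ) else 0 :=
    Measurable.ite (measurableSet_le measurable_const measurable_norm) measurable_const
      measurable_const
  refine Measurable.aestronglyMeasurable ?_
  unfold hBIntegrand energyDenom
  fun_prop

lemma hBIntegrand_reflect {M Λ σ : ℝ} {m j j' : Fin 3} {P : R3} (hm : m ≠ 2)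
    (hP : reflect m P = P) (h : Xor (j = m) (j' = m)) (x k : R3) (lam : Fin 2) :
    hBIntegrand M Λ σ P x lam j j' (reflect m k) = -hBIntegrand M Λ σ P x lam j j' k := by
  have hchi : chi Λ (reflect m k) = chi Λ k := by simp only [chi, LinearIsometryEquiv.norm_map]
  rw [hBIntegrand, hBIntegrand, conj_hB_mul_hB, conj_hB_mul_hB, cross_eps_mul_reflect hm h,
    energyDenom_reflect hP, LinearIsometryEquiv.norm_map, hchi]
  push_cast
  ring

theorem integral_eq_zero_of_comp_eq_neg {E G : Type*} [NormedAddCommGroup E]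
    [InnerProductSpace ℝ E] [FiniteDimensional ℝ E] [MeasurableSpace E] [BorelSpace E]
    [NormedAddCommGroup G] [NormedSpace ℝ G] (e : E ≃ₗᵢ[ℝ] E) {f : E → G}
    (hf : ∀ x, f (e x) = -f x) : ∫ x, f x = 0 := by
  have h := e.measurePreserving.integral_comp e.toHomeomorph.measurableEmbedding f
  simp only [hf, integral_neg] at h
  have := IsAddTorsionFree.of_isTorsionFree ℝ G
  exact neg_eq_self.1 h

lemma integral_hBIntegrand_eq_zero {M Λ σ : ℝ} {m j j' : Fin 3} {P : R3} (hm : m ≠ 2)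
    (hP : reflect m P = P) (h : Xor (j = m) (j' = m)) (x : R3) (lam : Fin 2) :
    ∫ k, hBIntegrand M Λ σ P x lam j j' k = 0 :=
  integral_eq_zero_of_comp_eq_neg (reflect m) (hBIntegrand_reflect hm hP h x · lam)

open MeasureTheory in
theorem offdiagonal_hB_integral_zero_general (M Λ P₃ σ : ℝ) (hM : 0 < M)
    (hP : |P₃| < M) (j j' : Fin 3) (hjj' : j ≠ j') :
    (∀ lam : Fin 2,
      Integrable (fun k : R3 =>
        (if σ ≤ ‖k‖ then (1 : ℂ) else 0) *
          ((starRingEnd ℂ) (hB Λ 0 k lam j) * hB Λ 0 k lam j') /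
          ((‖k‖ - (inner ℝ k (vec 0 0 P₃) : ℝ) / M + ‖k‖ ^ 2 / (2 * M) : ℝ) : ℂ))) ∧
    (∑ lam : Fin 2,
      ∫ k : R3,
        (if σ ≤ ‖k‖ then (1 : ℂ) else 0) *
          ((starRingEnd ℂ) (hB Λ 0 k lam j) * hB Λ 0 k lam j') /
          ((‖k‖ - (inner ℝ k (vec 0 0 P₃) : ℝ) / M + ‖k‖ ^ 2 / (2 * M) : ℝ) : ℂ)) = 0 := by
  have hP' : ‖vec 0 0 P₃‖ < M := by simpa [norm_vec, Real.sqrt_sq_eq_abs] using hP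
  obtain ⟨m, hm, hjm⟩ : ∃ m : Fin 3, m ≠ 2 ∧ Xor (j = m) (j' = m) := by
    by_cases hj : j = 2
    · exact ⟨j', hj ▸ hjj'.symm, .inr ⟨rfl, hjj'⟩⟩
    · exact ⟨j, hj, .inl ⟨rfl, hjj'.symm⟩⟩
  exact ⟨fun lam => integrable_hBIntegrand hM hP' Λ σ 0 lam j j',
    Finset.sum_eq_zero fun lam _ =>
      integral_hBIntegrand_eq_zero hm (reflect_vec_zero_zero hm P₃) hjm 0 lam⟩

open MeasureTheory in
/-- For `P = (0,0,P₃)` along the third axis and `j ≠ j'`, the off-diagonal integral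
`Σ_{λ=1,2} ∫ 1_{|k|≥σ} conj(h^B_j(0,k,λ)) h^B_{j'}(0,k,λ) / (|k| − (k·P)/M + |k|²/(2M)) dk`
vanishes, the integrand being Lebesgue integrable. -/
theorem offdiagonal_hB_integral_zero (M Λ P₃ σ : ℝ) (hM : 0 < M) (hΛ : 0 < Λ)
    (hP : |P₃| < M) (hσ0 : 0 ≤ σ) (hσΛ : σ ≤ Λ) (j j' : Fin 3) (hjj' : j ≠ j') :
    (∀ lam : Fin 2,
      Integrable (fun k : R3 =>
        (if σ ≤ ‖k‖ then (1 : ℂ) else 0) *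
          ((starRingEnd ℂ) (hB Λ 0 k lam j) * hB Λ 0 k lam j') /
          ((‖k‖ - (inner ℝ k (vec 0 0 P₃) : ℝ) / M + ‖k‖ ^ 2 / (2 * M) : ℝ) : ℂ))) ∧
    (∑ lam : Fin 2,
      ∫ k : R3,
        (if σ ≤ ‖k‖ then (1 : ℂ) else 0) *
          ((starRingEnd ℂ) (hB Λ 0 k lam j) * hB Λ 0 k lam j') /
          ((‖k‖ - (inner ℝ k (vec 0 0 P₃) : ℝ) / M + ‖k‖ ^ 2 / (2 * M) : ℝ) : ℂ)) = 0 :=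
  offdiagonal_hB_integral_zero_general M Λ P₃ σ hM hP j j' hjj'
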